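/- Suppose {a,b} ⊂ L^∞(T) is nondegenerate and f ∈ ker(aP^+ + bP^-). If P^+ f vanishes on a set of positive measure on T, or P^- f vanishes on a set of positive measure, then f = 0. -/

import Mathlib

open MeasureTheory Complex Real AddCircle
open scoped ENNReal ComplexConjugate

noncomputable section

instance : Fact (0 < 2 * π) := ⟨by positivity⟩

/-- Normalized Haar (Lebesgue) measure on the unit circle, realized as `AddCircle (2π)`. -/
abbrev μT : Measure (AddCircle (2 * π)) := AddCircle.haarAddCircle

/-- The Lebesgue space `L²(𝕋)`. -/
abbrev L2 : Type := Lp ℂ 2 μT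

/-- The space `L^∞(𝕋)`. -/
abbrev Linf : Type := Lp ℂ ∞ μT

/-- Multiplication of an `L²` function by an `L^∞` function, as an element of `L²`. -/
def mul2 (a : Linf) (f : L2) : L2 :=
  ((Lp.memLp f).smul (Lp.memLp a)).toLp ((a : AddCircle (2 * π) → ℂ) • (f : AddCircle (2 * π) → ℂ))

lemma mul2_coe (a : Linf) (f : L2) :
    (mul2 a f : AddCircle (2 * π) → ℂ) =ᵐ[μT] fun x => a x * f x :=
  (MemLp.coeFn_toLp _)

/-- Multiplication in `L^∞`. -/
def mulInf (a b : Linf) : Linf :=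
  ((Lp.memLp b).smul (Lp.memLp a)).toLp ((a : AddCircle (2 * π) → ℂ) • (b : AddCircle (2 * π) → ℂ))

lemma mulInf_coe (a b : Linf) :
    (mulInf a b : AddCircle (2 * π) → ℂ) =ᵐ[μT] fun x => a x * b x :=
  (MemLp.coeFn_toLp _)

/-- Complex conjugation on `Lp`. -/
def conjLp {p : ℝ≥0∞} [Fact (1 ≤ p)] (f : Lp ℂ p μT) : Lp ℂ p μT :=
  MemLp.toLp (fun x => conj (f x))
    ⟨continuous_star.comp_aestronglyMeasurable (Lp.aestronglyMeasurable f),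
      by
        rw [eLpNorm_congr_norm_ae (g := (f : AddCircle (2 * π) → ℂ))
          (Filter.Eventually.of_forall fun x => by simp)]
        exact (Lp.memLp f).2⟩

lemma conjLp_coe {p : ℝ≥0∞} [Fact (1 ≤ p)] (f : Lp ℂ p μT) :
    (conjLp f : AddCircle (2 * π) → ℂ) =ᵐ[μT] fun x => conj (f x) :=
  (MemLp.coeFn_toLp _)

/-- The Hardy space `H²`, as the subspace of `L²(𝕋)` of functions whose negative Fourier
coefficients vanish. -/
def Hardy : Submodule ℂ L2 where
  carrier := {f | ∀ n : ℤ, n < 0 → fourierBasis.repr f n = 0}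
  add_mem' := fun hf hg n hn => by simp [hf n hn, hg n hn]
  zero_mem' := fun n hn => by simp
  smul_mem' := fun c f hf n hn => by simp [hf n hn]

lemma hardy_isClosed : IsClosed (Hardy : Set L2) := by
  have h : (Hardy : Set L2)
      = ⋂ n : ℤ, ⋂ _ : n < 0, {f : L2 | fourierBasis.repr f n = 0} := by
    ext f
    simp [Hardy, Set.mem_iInter]
  rw [h]
  refine isClosed_iInter fun n => isClosed_iInter fun hn => ?_
  have hc : Continuous fun f : L2 => fourierBasis.repr f n := by
    have : (fun f : L2 => fourierBasis.repr f n)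
        = fun f : L2 => (innerSL ℂ (fourierBasis n : L2)) f := by
      ext f
      rw [HilbertBasis.repr_apply_apply]
      rfl
    rw [this]
    exact (innerSL ℂ (fourierBasis n : L2)).continuous
  exact isClosed_eq hc continuous_const

instance : CompleteSpace Hardy := hardy_isClosed.completeSpace_coe

/-- The Riesz projection `P⁺ : L² → L²`, i.e. the orthogonal projection onto `H²`. -/
def Pplus : L2 →L[ℂ] L2 := Hardy.subtypeL.comp Hardy.orthogonalProjectionOnto

/-- The complementary projection `P⁻ = I - P⁺`. -/
def Pminus : L2 →L[ℂ] L2 := ContinuousLinearMap.id ℂ L2 - Pplus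

lemma mul2_norm_le (a : Linf) (f : L2) : ‖mul2 a f‖ ≤ ‖a‖ * ‖f‖ := by
  rw [mul2, Lp.norm_toLp]
  have h := eLpNorm_smul_le_eLpNorm_top_mul_eLpNorm 2
    (Lp.aestronglyMeasurable f) (φ := (a : AddCircle (2 * π) → ℂ))
  refine le_trans (ENNReal.toReal_mono ?_ h) ?_
  · exact ENNReal.mul_ne_top (Lp.memLp a).2.ne (Lp.memLp f).2.ne
  · rw [ENNReal.toReal_mul, Lp.norm_def, Lp.norm_def]

/-- Multiplication by an `L^∞` function `a`, as a bounded operator `M_a` on `L²`. -/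
def Mult (a : Linf) : L2 →L[ℂ] L2 :=
  LinearMap.mkContinuous
    { toFun := mul2 a
      map_add' := fun f g => by
        refine Lp.ext ?_
        filter_upwards [mul2_coe a (f + g), mul2_coe a f, mul2_coe a g,
          Lp.coeFn_add f g, Lp.coeFn_add (mul2 a f) (mul2 a g)] with x h1 h2 h3 h4 h5
        simp only [h1, h5, Pi.add_apply, h2, h3, h4, mul_add]
      map_smul' := fun c f => by
        refine Lp.ext ?_
        filter_upwards [mul2_coe a (c • f), mul2_coe a f,
          Lp.coeFn_smul c f, Lp.coeFn_smul c (mul2 a f)] with x h1 h2 h3 h4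
        simp only [h1, h4, Pi.smul_apply, h2, h3, smul_eq_mul, RingHom.id_apply]
        ring }
    ‖a‖ (fun f => mul2_norm_le a f)

/-- The paired operator `S_{a,b} = a P⁺ + b P⁻` on `L²(𝕋)`. -/
def pairedS (a b : Linf) : L2 →L[ℂ] L2 :=
  (Mult a).comp Pplus + (Mult b).comp Pminus

/-- The transposed paired operator `Σ_{a,b} = P⁺ a + P⁻ b` on `L²(𝕋)`. -/
def pairedSigma (a b : Linf) : L2 →L[ℂ] L2 :=
  Pplus.comp (Mult a) + Pminus.comp (Mult b)

/-- Membership in `H^∞`: an `L^∞` function whose negative Fourier coefficients vanish. -/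
def MemHinf (a : Linf) : Prop := ∀ n : ℤ, n < 0 → fourierCoeff (a : AddCircle (2 * π) → ℂ) n = 0

/-- A pair `{a,b}` is nondegenerate if `a`, `b` and `a - b` are all nonzero a.e. on `𝕋`. -/
def Nondegenerate (a b : Linf) : Prop :=
  (∀ᵐ x ∂μT, a x ≠ 0) ∧ (∀ᵐ x ∂μT, b x ≠ 0) ∧ (∀ᵐ x ∂μT, a x - b x ≠ 0)

/-! If `g ∈ H²` vanishes on a set `E` of positive measure, so does every element of the closed
span `M` of `{zⁿ g : n ≥ 0}`. Either `g ∈ zM`, and then `z⁻¹ M ⊆ M`, so that every `z⁻ʲ g` lies in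
`M ⊆ H²` and all Fourier coefficients of `g` vanish; or the component `φ ≠ 0` of `g` orthogonal to
`zM` satisfies `⟪zⁿ φ, φ⟫ = 0` for `n ≥ 1`, i.e. all non-constant Fourier coefficients of `|φ|²`
vanish, so `|φ|` is a.e. constant, which is impossible for a nonzero `φ ∈ M` vanishing on `E`.
For `f ∈ ker S_{a,b}` the relation `a P⁺f = -b P⁻f` moves the zero set of `P⁻f` into that of
`P⁺f`, so `P⁺f = 0` by the above, and then `b P⁻f = 0` gives `P⁻f = 0`. -/

open scoped InnerProductSpace

namespace AddCircle

variable {T : ℝ} [Fact (0 < T)]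

lemma integral_fourier_haarAddCircle {n : ℤ} (hn : n ≠ 0) :
    ∫ x, fourier n x ∂haarAddCircle (T := T) = 0 := by
  have := congr_fun (fourierCoeff_fourier (T := T) 0) (-n)
  simpa [fourierCoeff, fourier_zero, Pi.single_apply, hn] using this

theorem measure_ext_of_integral_fourier_eq {ν₁ ν₂ : Measure (AddCircle T)}
    [IsFiniteMeasure ν₁] [IsFiniteMeasure ν₂]
    (h : ∀ n : ℤ, ∫ x, fourier n x ∂ν₁ = ∫ x, fourier n x ∂ν₂) : ν₁ = ν₂ := by
  have hint : ∀ (ν : Measure (AddCircle T)) [IsFiniteMeasure ν] (ψ : C(AddCircle T, ℂ)),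
      L1.integralCLM' ℂ (ContinuousMap.toLp 1 ν ℂ ψ) = ∫ x, ψ x ∂ν := by
    intro ν _ ψ
    rw [← L1.integral_eq' ℂ, L1.integral_eq_integral]
    exact integral_congr_ae (ContinuousMap.coeFn_toLp ν ψ)
  have hΛ : (L1.integralCLM' (E := ℂ) ℂ).comp (ContinuousMap.toLp 1 ν₁ ℂ)
      = (L1.integralCLM' (E := ℂ) ℂ).comp (ContinuousMap.toLp 1 ν₂ ℂ) := by
    refine ContinuousLinearMap.ext_on
      (Submodule.dense_iff_topologicalClosure_eq_top.mpr span_fourier_closure_eq_top) ?_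
    rintro _ ⟨n, rfl⟩
    simpa only [ContinuousLinearMap.comp_apply, hint] using h n
  refine ext_of_forall_integral_eq_of_IsFiniteMeasure fun f => ?_
  have := congr($hΛ ⟨fun x => (f x : ℂ), by fun_prop⟩)
  simp only [ContinuousLinearMap.comp_apply, hint, ContinuousMap.coe_mk] at this
  exact_mod_cast this

lemma integral_fourier_withDensity {u : AddCircle T → ℝ} (hu : Integrable u haarAddCircle)
    (hu₀ : 0 ≤ᵐ[haarAddCircle] u) (n : ℤ) :
    ∫ x, fourier n x ∂(haarAddCircle.withDensity fun x => ENNReal.ofReal (u x))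
      = ∫ x, fourier n x * u x ∂haarAddCircle := by
  rw [integral_withDensity_eq_integral_toReal_smul₀ hu.aemeasurable.ennreal_ofReal
    (.of_forall fun _ => ENNReal.ofReal_lt_top)]
  refine integral_congr_ae ?_
  filter_upwards [hu₀] with x hx
  rw [ENNReal.toReal_ofReal hx, Complex.real_smul, mul_comm]

theorem ae_eq_integral_of_integral_fourier_mul_eq_zero {u : AddCircle T → ℝ}
    (hu : Integrable u haarAddCircle) (hu₀ : 0 ≤ᵐ[haarAddCircle] u)
    (h : ∀ n : ℤ, n ≠ 0 → ∫ x, fourier n x * u x ∂haarAddCircle = 0) :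
    u =ᵐ[haarAddCircle] fun _ => ∫ x, u x ∂haarAddCircle := by
  set c := ∫ x, u x ∂haarAddCircle
  have hc₀ : 0 ≤ c := integral_nonneg_of_ae hu₀
  have := isFiniteMeasure_withDensity_ofReal hu.hasFiniteIntegral
  have := isFiniteMeasure_withDensity_ofReal
    (integrable_const (μ := haarAddCircle (T := T)) c).hasFiniteIntegral
  have hν : haarAddCircle.withDensity (fun x => ENNReal.ofReal (u x))
      = haarAddCircle.withDensity fun _ => ENNReal.ofReal c := by
    refine measure_ext_of_integral_fourier_eq fun n => ?_
    rw [integral_fourier_withDensity hu hu₀,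
      integral_fourier_withDensity (integrable_const c) (.of_forall fun _ => hc₀)]
    rcases eq_or_ne n 0 with rfl | hn
    · simpa [c] using integral_complex_ofReal
    · rw [h n hn, integral_mul_const, integral_fourier_haarAddCircle hn, zero_mul]
  have hae := (withDensity_eq_iff hu.aemeasurable.ennreal_ofReal aemeasurable_const
    hu.lintegral_lt_top.ne).mp hν
  filter_upwards [hae, hu₀] with x hx hx₀
  exact (ENNReal.ofReal_eq_ofReal_iff hx₀ hc₀).mp hx

end AddCircle

lemma LpToLpRestrictCLM_eq_zero_iff {α F 𝕜 : Type*} [MeasurableSpace α] {μ : Measure α}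
    [NormedAddCommGroup F] [NormedRing 𝕜] [Module 𝕜 F] [IsBoundedSMul 𝕜 F] {p : ℝ≥0∞}
    [Fact (1 ≤ p)] (s : Set α) (f : Lp F p μ) :
    LpToLpRestrictCLM α F 𝕜 μ p s f = 0 ↔ f =ᵐ[μ.restrict s] 0 := by
  rw [Lp.eq_zero_iff_ae_eq_zero]
  exact ⟨(LpToLpRestrictCLM_coeFn 𝕜 s f).symm.trans, (LpToLpRestrictCLM_coeFn 𝕜 s f).trans⟩

lemma Lp.eq_zero_of_ae_norm_eq_of_ae_restrict_eq_zero {α E : Type*} [MeasurableSpace α]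
    {μ : Measure α} [NormedAddCommGroup E] {p : ℝ≥0∞} {f : Lp E p μ} {c : ℝ} {s : Set α}
    (hc : ∀ᵐ x ∂μ, ‖f x‖ = c) (hs : μ s ≠ 0) (hf : f =ᵐ[μ.restrict s] 0) : f = 0 := by
  have : (ae (μ.restrict s)).NeBot := ae_neBot.mpr (Measure.restrict_eq_zero.not.mpr hs)
  obtain ⟨x, hxc, hx0⟩ := ((ae_restrict_of_ae hc).and hf).exists
  rw [Lp.eq_zero_iff_ae_eq_zero]
  filter_upwards [hc] with y hy
  simpa [← hxc, hx0] using hy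

section CircleL2

local notation "𝕋" => AddCircle (2 * π)

lemma coeFn_Mult (a : Linf) (f : L2) : (Mult a f : 𝕋 → ℂ) =ᵐ[μT] fun x => a x * f x :=
  mul2_coe a f

lemma Mult_eq_zero_iff {a : Linf} (ha : ∀ᵐ x ∂μT, a x ≠ 0) {f : L2} : Mult a f = 0 ↔ f = 0 := by
  refine ⟨fun h => ?_, by rintro rfl; exact map_zero _⟩
  rw [Lp.eq_zero_iff_ae_eq_zero] at h ⊢
  filter_upwards [coeFn_Mult a f, h, ha] with x hx h0 hax
  simpa [hax] using hx.symm.trans h0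

def bilateralShift (n : ℤ) : L2 →L[ℂ] L2 := Mult (fourierLp ∞ n)

lemma coeFn_bilateralShift (n : ℤ) (v : L2) :
    (bilateralShift n v : 𝕋 → ℂ) =ᵐ[μT] fun x => fourier n x * v x := by
  filter_upwards [coeFn_Mult (fourierLp ∞ n) v, coeFn_fourierLp (T := 2 * π) ∞ n] with x h1 h2
  exact h1.trans (by rw [h2])

lemma bilateralShift_add (m n : ℤ) (v : L2) :
    bilateralShift (m + n) v = bilateralShift m (bilateralShift n v) := by
  refine Lp.ext ?_
  filter_upwards [coeFn_bilateralShift (m + n) v, coeFn_bilateralShift m (bilateralShift n v),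
    coeFn_bilateralShift n v] with x h1 h2 h3
  rw [h1, h2, h3, fourier_add, mul_assoc]

lemma bilateralShift_zero (v : L2) : bilateralShift 0 v = v := by
  refine Lp.ext ?_
  filter_upwards [coeFn_bilateralShift 0 v] with x h
  rw [h, fourier_zero, one_mul]

lemma fourierBasis_repr_bilateralShift (n : ℤ) (v : L2) (m : ℤ) :
    fourierBasis.repr (bilateralShift n v) m = fourierBasis.repr v (m - n) := by
  rw [fourierBasis_repr, fourierBasis_repr, fourierCoeff_congr_ae (coeFn_bilateralShift n v)]
  refine integral_congr_ae (.of_forall fun x => ?_)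
  simp only [smul_eq_mul]
  rw [show -(m - n) = -m + n by ring, fourier_add]
  ring

lemma inner_bilateralShift_self (n : ℤ) (φ : L2) :
    ⟪bilateralShift n φ, φ⟫_ℂ = ∫ x, fourier (-n) x * (‖φ x‖ ^ 2 : ℝ) ∂μT := by
  rw [MeasureTheory.L2.inner_def]
  refine integral_congr_ae ?_
  filter_upwards [coeFn_bilateralShift n φ] with x h
  rw [RCLike.inner_apply, h, map_mul, fourier_neg, Complex.ofReal_pow, ← Complex.mul_conj']
  ring

lemma inner_bilateralShift_neg_self (n : ℤ) (φ : L2) :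
    ⟪bilateralShift (-n) φ, φ⟫_ℂ = conj ⟪bilateralShift n φ, φ⟫_ℂ := by
  rw [inner_bilateralShift_self, inner_bilateralShift_self, ← integral_conj]
  simp only [map_mul, Complex.conj_ofReal, fourier_neg, neg_neg, starRingEnd_self_apply]

/-- The inner products `⟪zⁿ φ, φ⟫` are the Fourier coefficients of `|φ|²`. -/
lemma exists_ae_norm_eq_of_inner_bilateralShift_self_eq_zero {φ : L2}
    (h : ∀ n : ℤ, 0 < n → ⟪bilateralShift n φ, φ⟫_ℂ = 0) : ∃ c : ℝ, ∀ᵐ x ∂μT, ‖φ x‖ = c := by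
  have hint : Integrable (fun x => ‖φ x‖ ^ 2) μT :=
    (Lp.memLp φ).integrable_norm_pow two_ne_zero
  have hfourier : ∀ n : ℤ, n ≠ 0 → ∫ x, fourier n x * (‖φ x‖ ^ 2 : ℝ) ∂μT = 0 := by
    intro n hn
    rw [← neg_neg n, ← inner_bilateralShift_self]
    rcases hn.lt_or_gt with hn | hn
    · exact h _ (by omega)
    · rw [inner_bilateralShift_neg_self, h n hn, map_zero]
  refine ⟨√(∫ x, ‖φ x‖ ^ 2 ∂μT), ?_⟩
  filter_upwards [AddCircle.ae_eq_integral_of_integral_fourier_mul_eq_zero hint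
    (.of_forall fun _ => by positivity) hfourier] with x hx
  rw [← hx, Real.sqrt_sq (norm_nonneg _)]

def shiftSpan (g : L2) (k : ℤ) : Submodule ℂ L2 :=
  (Submodule.span ℂ ((fun n => bilateralShift n g) '' Set.Ici k)).topologicalClosure

section ShiftSpan

variable {g : L2} {k : ℤ}

lemma isClosed_shiftSpan (g : L2) (k : ℤ) : IsClosed (shiftSpan g k : Set L2) :=
  Submodule.isClosed_topologicalClosure _

lemma shiftSpan_le {W : Submodule ℂ L2} (hW : IsClosed (W : Set L2))
    (h : ∀ n, k ≤ n → bilateralShift n g ∈ W) : shiftSpan g k ≤ W := by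
  refine Submodule.topologicalClosure_minimal _ (Submodule.span_le.mpr ?_) hW
  rintro _ ⟨n, hn, rfl⟩
  exact h n hn

lemma bilateralShift_mem_shiftSpan {n : ℤ} (hn : k ≤ n) : bilateralShift n g ∈ shiftSpan g k :=
  Submodule.le_topologicalClosure _ (Submodule.subset_span ⟨n, hn, rfl⟩)

lemma self_mem_shiftSpan_zero : g ∈ shiftSpan g 0 := by
  simpa only [bilateralShift_zero] using bilateralShift_mem_shiftSpan (g := g) (n := 0) le_rfl

lemma bilateralShift_mem_shiftSpan_of_mem {φ : L2} (hφ : φ ∈ shiftSpan g k) (m : ℤ) :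
    bilateralShift m φ ∈ shiftSpan g (m + k) := by
  have hW := (isClosed_shiftSpan g (m + k)).preimage (bilateralShift m).continuous
  refine shiftSpan_le (W := (shiftSpan g (m + k)).comap (bilateralShift m).toLinearMap) hW
    (fun n hn => ?_) hφ
  rw [Submodule.mem_comap, ContinuousLinearMap.coe_coe, ← bilateralShift_add]
  exact bilateralShift_mem_shiftSpan (by omega)

lemma shiftSpan_antitone (g : L2) : Antitone (shiftSpan g) := fun _ _ hkl =>
  shiftSpan_le (isClosed_shiftSpan g _) fun _ hn => bilateralShift_mem_shiftSpan (hkl.trans hn)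

lemma bilateralShift_neg_mem_shiftSpan_zero (hg : g ∈ shiftSpan g 1) (j : ℕ) :
    bilateralShift (-j) g ∈ shiftSpan g 0 := by
  have hM : shiftSpan g 0 ≤ shiftSpan g 1 := by
    refine shiftSpan_le (isClosed_shiftSpan g _) fun n hn => ?_
    rcases hn.eq_or_lt with rfl | hn
    · rwa [bilateralShift_zero]
    · exact bilateralShift_mem_shiftSpan hn
  induction j with
  | zero => simpa only [Nat.cast_zero, neg_zero, bilateralShift_zero] using self_mem_shiftSpan_zero
  | succ j ih =>
    have := bilateralShift_mem_shiftSpan_of_mem (hM ih) (-1)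
    rwa [← bilateralShift_add, neg_add_cancel, show -1 + -(j : ℤ) = -↑(j + 1) by push_cast; ring]
      at this

lemma exists_wandering_mem_shiftSpan (hg : g ∉ shiftSpan g 1) :
    ∃ φ ∈ shiftSpan g 0, φ ≠ 0 ∧ ∀ n : ℤ, 0 < n → ⟪bilateralShift n φ, φ⟫_ℂ = 0 := by
  set N := shiftSpan g 1
  have : CompleteSpace N := (isClosed_shiftSpan g 1).completeSpace_coe
  have hφ : g - N.starProjection g ∈ shiftSpan g 0 :=
    sub_mem self_mem_shiftSpan_zero
      (shiftSpan_antitone g zero_le_one (N.starProjection_apply_mem g))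
  refine ⟨_, hφ, sub_ne_zero.mpr fun h => hg (h ▸ N.starProjection_apply_mem g), fun n hn => ?_⟩
  exact Submodule.inner_right_of_mem_orthogonal
    (shiftSpan_antitone g (by omega) (bilateralShift_mem_shiftSpan_of_mem hφ n))
    (N.sub_starProjection_mem_orthogonal g)

lemma shiftSpan_zero_le_Hardy (hg : g ∈ Hardy) : shiftSpan g 0 ≤ Hardy :=
  shiftSpan_le hardy_isClosed fun n hn m hm => by
    rw [fourierBasis_repr_bilateralShift]
    exact hg _ (by omega)

end ShiftSpan

lemma Hardy.eq_zero_of_forall_bilateralShift_neg_mem {g : L2}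
    (h : ∀ j : ℕ, bilateralShift (-j) g ∈ Hardy) : g = 0 := by
  refine fourierBasis.repr.map_eq_zero_iff.mp (lp.ext (funext fun m => ?_))
  have := h (m.toNat + 1) (m - (m.toNat + 1 : ℕ)) (by omega)
  rwa [fourierBasis_repr_bilateralShift, sub_neg_eq_add, sub_add_cancel] at this

/-- Luzin–Privalov for `H²`. -/
theorem Hardy.eq_zero_of_measure_ne_zero {g : L2} (hg : g ∈ Hardy)
    (hE : μT {x | g x = 0} ≠ 0) : g = 0 := by
  set E := {x | g x = 0}
  have hEm : MeasurableSet E := (Lp.stronglyMeasurable g).measurable (measurableSet_singleton 0)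
  have hvanish : shiftSpan g 0 ≤ LinearMap.ker (LpToLpRestrictCLM 𝕋 ℂ ℂ μT 2 E).toLinearMap := by
    refine shiftSpan_le (ContinuousLinearMap.isClosed_ker _) fun n _ => ?_
    rw [LinearMap.mem_ker, ContinuousLinearMap.coe_coe, LpToLpRestrictCLM_eq_zero_iff]
    filter_upwards [ae_restrict_of_ae (coeFn_bilateralShift n g), ae_restrict_mem hEm]
      with x hx hxE
    rw [hx, hxE, mul_zero, Pi.zero_apply]
  by_cases hg1 : g ∈ shiftSpan g 1
  · exact eq_zero_of_forall_bilateralShift_neg_mem fun j =>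
      shiftSpan_zero_le_Hardy hg (bilateralShift_neg_mem_shiftSpan_zero hg1 j)
  · obtain ⟨φ, hφ, hφ0, horth⟩ := exists_wandering_mem_shiftSpan hg1
    obtain ⟨c, hc⟩ := exists_ae_norm_eq_of_inner_bilateralShift_self_eq_zero horth
    have hφE := (LpToLpRestrictCLM_eq_zero_iff E φ).mp (hvanish hφ)
    exact absurd (Lp.eq_zero_of_ae_norm_eq_of_ae_restrict_eq_zero hc hE hφE) hφ0

lemma Pplus_mem_Hardy (f : L2) : Pplus f ∈ Hardy :=
  (Hardy.orthogonalProjectionOnto f).2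

lemma Pplus_add_Pminus (f : L2) : Pplus f + Pminus f = f := by
  simp [Pminus]

lemma pairedS_apply (a b : Linf) (f : L2) :
    pairedS a b f = Mult a (Pplus f) + Mult b (Pminus f) :=
  rfl

lemma coeFn_pairedS (a b : Linf) (f : L2) :
    (pairedS a b f : 𝕋 → ℂ) =ᵐ[μT] fun x => a x * Pplus f x + b x * Pminus f x := by
  rw [pairedS_apply]
  filter_upwards [Lp.coeFn_add (Mult a (Pplus f)) (Mult b (Pminus f)), coeFn_Mult a (Pplus f),
    coeFn_Mult b (Pminus f)] with x h h1 h2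
  rw [h, Pi.add_apply, h1, h2]

end CircleL2

/-- If `{a,b}` is nondegenerate, `f ∈ ker S_{a,b}`, and `P⁺f` or `P⁻f` vanishes on a set
of positive measure, then `f = 0`. -/
theorem statement13 (a b : Linf) (h : Nondegenerate a b) (f : L2)
    (hf : pairedS a b f = 0)
    (hz : μT {x | (Pplus f : AddCircle (2 * π) → ℂ) x = 0} ≠ 0
        ∨ μT {x | (Pminus f : AddCircle (2 * π) → ℂ) x = 0} ≠ 0) :
    f = 0 := by
  obtain ⟨ha, hb, -⟩ := h
  have hker : ∀ᵐ x ∂μT, a x * Pplus f x + b x * Pminus f x = 0 := by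
    filter_upwards [coeFn_pairedS a b f, Lp.eq_zero_iff_ae_eq_zero.mp hf] with x h1 h2
    rw [← h1, h2, Pi.zero_apply]
  have hplus : μT {x | (Pplus f : AddCircle (2 * π) → ℂ) x = 0} ≠ 0 := by
    refine hz.elim id fun hminus => ?_
    refine (pos_iff_ne_zero.mpr hminus |>.trans_le (measure_mono_ae ?_)).ne'
    filter_upwards [ha, hker] with x hax hx (hkx : Pminus f x = 0)
    show Pplus f x = 0
    simpa [hkx, hax] using hx
  have hP : Pplus f = 0 := Hardy.eq_zero_of_measure_ne_zero (Pplus_mem_Hardy f) hplus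
  have hM : Pminus f = 0 := by
    rw [← Mult_eq_zero_iff hb, ← hf, pairedS_apply, hP, map_zero, zero_add]
  rw [← Pplus_add_Pminus f, hP, hM, add_zero]

end
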